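/- arXiv:2009.08147 — 3 statements merged into one kernel-verified Lean document; each statement's English description precedes it below -/
import Mathlib

section
/- Let X be a proper metric space and r a large-scale proximity relation on X. Let δ_r X be the set of r-ultrafilters on X, equipped with the topology generated by the sets {F ∈ δ_r X : A ∉ F} for A ⊆ X, and let λ_r be the relation on δ_r X defined by F λ_r G iff A r B for all A ∈ F and B ∈ G. Then the quotient space ∂'_r X = δ_r X / λ_r (with the quotient topology) is a compact Hausdorff topological space. -/
open Topology

/-- A subset `E ⊆ X × X` is an entourage if `sup_{(x,y) ∈ E} d(x,y) < ∞`. -/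
def IsEntourage {X : Type*} [MetricSpace X] (E : Set (X × X)) : Prop :=
  ∃ C : ℝ, ∀ p ∈ E, dist p.1 p.2 ≤ C

/-- `E[S] = {x | ∃ y ∈ S, (x,y) ∈ E}`. -/
def EImage {X : Type*} (E : Set (X × X)) (S : Set X) : Set X :=
  {x | ∃ y ∈ S, (x, y) ∈ E}

/-- Subsets `A, B` are close (`A ≍ B`): there are `R ≥ 0` and a sequence
`(aₙ, bₙ) ∈ A × B` with `d(aₙ, bₙ) ≤ R` and `{aₙ}` unbounded. -/
def Close {X : Type*} [MetricSpace X] (A B : Set X) : Prop :=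
  ∃ R : ℝ, 0 ≤ R ∧ ∃ a b : ℕ → X, (∀ n, a n ∈ A) ∧ (∀ n, b n ∈ B) ∧
    (∀ n, dist (a n) (b n) ≤ R) ∧ ¬ Bornology.IsBounded (Set.range a)

/-- `A ≍_f B` iff there do not exist `A' ⊇ A`, `B' ⊇ B` with `A' ∪ B' = X` and `¬(A' ≍ B')`. -/
def CloseF {X : Type*} [MetricSpace X] (A B : Set X) : Prop :=
  ¬ ∃ A' B' : Set X, A ⊆ A' ∧ B ⊆ B' ∧ A' ∪ B' = Set.univ ∧ ¬ Close A' B'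

/-- A large-scale proximity relation. -/
structure IsLSP {X : Type*} [MetricSpace X] (r : Set X → Set X → Prop) : Prop where
  not_self_iff_bounded : ∀ B : Set X, (¬ r B B) ↔ Bornology.IsBounded B
  symm : ∀ A B : Set X, r A B → r B A
  entourage_invariant : ∀ (A A' : Set X) (E : Set (X × X)), IsEntourage E →
    A' ⊆ EImage E A → A ⊆ EImage E A' → ∀ B : Set X, r A B → r A' B
  union_iff : ∀ A B C : Set X, r (A ∪ B) C ↔ (r A C ∨ r B C)
  separation : ∀ A B : Set X, ¬ r A B →
    ∃ C D : Set X, C ∪ D = Set.univ ∧ ¬ r C A ∧ ¬ r D B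

/-- An `r`-ultrafilter on `X`. -/
def IsRUltrafilter {X : Type*} (r : Set X → Set X → Prop) (F : Set (Set X)) : Prop :=
  (∀ A ∈ F, ∀ B ∈ F, r A B) ∧ (∀ A B : Set X, A ∪ B ∈ F → A ∈ F ∨ B ∈ F) ∧ Set.univ ∈ F

/-- A compactification `i : X → X̄` is coarse if for every entourage `E`, the closure of
`(i × i)(E)` meets `(∂X × X̄) ∪ (X̄ × ∂X)` only inside the diagonal over `∂X = X̄ ∖ i(X)`. -/
def IsCoarseCompactification {X Xb : Type*} [MetricSpace X] [TopologicalSpace Xb]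
    (i : X → Xb) : Prop :=
  ∀ E : Set (X × X), IsEntourage E →
    closure ((fun p : X × X => (i p.1, i p.2)) '' E) ∩
      (((Set.range i)ᶜ ×ˢ (Set.univ : Set Xb)) ∪ ((Set.univ : Set Xb) ×ˢ (Set.range i)ᶜ)) ⊆
      {q : Xb × Xb | q.1 = q.2 ∧ q.1 ∈ (Set.range i)ᶜ}

/-- A Higson function: bounded, continuous, and for every entourage `E` and `ε > 0`
there is a bounded set `B` outside of which the variation on `E` is `< ε`. -/
def IsHigson {X : Type*} [MetricSpace X] (φ : X → ℝ) : Prop :=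
  Continuous φ ∧ (∃ C : ℝ, ∀ x, |φ x| ≤ C) ∧
  ∀ E : Set (X × X), IsEntourage E → ∀ ε > (0:ℝ), ∃ B : Set X, Bornology.IsBounded B ∧
    ∀ p ∈ E, (p.1 ∉ B ∨ p.2 ∉ B) → |φ p.1 - φ p.2| < ε

/-- A coarse map: coarsely uniform and coarsely proper. -/
def IsCoarseMap {X Y : Type*} [MetricSpace X] [MetricSpace Y] (f : X → Y) : Prop :=
  (∀ E : Set (X × X), IsEntourage E →
    IsEntourage ((fun p : X × X => (f p.1, f p.2)) '' E)) ∧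
  (∀ S : Set Y, Bornology.IsBounded S → Bornology.IsBounded (f ⁻¹' S))

/-- The Gromov product `(x|y)_w`. -/
noncomputable def gromovProd {X : Type*} [MetricSpace X] (w x y : X) : ℝ :=
  (dist x w + dist y w - dist x y) / 2

/-- `X` is a geodesic metric space. -/
def IsGeodesicSpace (X : Type*) [MetricSpace X] : Prop :=
  ∀ x y : X, ∃ γ : ℝ → X, γ 0 = x ∧ γ (dist x y) = y ∧
    ∀ s ∈ Set.Icc (0:ℝ) (dist x y), ∀ t ∈ Set.Icc (0:ℝ) (dist x y),
      dist (γ s) (γ t) = |s - t|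

/-!
`δ_r X` is compact: it is a continuous image of the set of indicator functions of
`r`-ultrafilters, a closed subset of the Cantor cube `Set X → Bool`. Hence so is its quotient.

For Hausdorffness, if `F` and `G` are not `λ_r`-related pick `A ∈ F`, `B ∈ G` with `¬ A r B`;
separating twice gives `M, N` with `¬ M r A`, `¬ N r B` and `¬ Mᶜ r Nᶜ`. Then any two
`λ_r`-related ultrafilters `K, H` have `M ∈ K` or `N ∈ H`, while no ultrafilter containing `M`
(resp. `N`) is related to `F` (resp. `G`). The sets `{K | M ∈ K}` and `{H | N ∈ H}` are closed,
and so are their saturations since `λ_r` is a closed relation on a compact space; the complements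
of their images separate the classes of `F` and `G`.
-/

section QuotByClosedEquivalence

variable {Y : Type*} [TopologicalSpace Y] {s : Y → Y → Prop}

theorem isClosedMap_quot_mk [CompactSpace Y] (hs : Equivalence s)
    (hclosed : IsClosed {p : Y × Y | s p.1 p.2}) : IsClosedMap (Quot.mk s) := by
  intro P hP
  have hsat : Quot.mk s ⁻¹' (Quot.mk s '' P) =
      Prod.snd '' ({p : Y × Y | s p.1 p.2} ∩ P ×ˢ Set.univ) := by
    ext y
    simp [Quot.eq, hs.eqvGen_iff, and_comm]
  rw [← isQuotientMap_quot_mk.isClosed_preimage, hsat]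
  exact isClosedMap_snd_of_compactSpace _ (hclosed.inter (hP.prod isClosed_univ))

theorem t2Space_quot_of_separating [CompactSpace Y] (hs : Equivalence s)
    (hsep : ∀ x y, ¬ s x y → ∃ P Q : Set Y, IsClosed P ∧ IsClosed Q ∧
      (∀ z w, s z w → z ∈ P ∨ w ∈ Q) ∧ (∀ z ∈ P, ¬ s z x) ∧ (∀ z ∈ Q, ¬ s z y)) :
    T2Space (Quot s) := by
  have hclosed : IsClosed {p : Y × Y | s p.1 p.2} := by
    refine isOpen_compl_iff.mp (isOpen_iff_forall_mem_open.mpr fun ⟨x, y⟩ hxy => ?_)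
    obtain ⟨P, Q, hP, hQ, hcover, hPx, hQy⟩ := hsep x y hxy
    refine ⟨Pᶜ ×ˢ Qᶜ, fun ⟨z, w⟩ ⟨hz, hw⟩ hzw => (hcover z w hzw).elim hz hw,
      hP.isOpen_compl.prod hQ.isOpen_compl, fun hx => hPx x hx (hs.refl x),
      fun hy => hQy y hy (hs.refl y)⟩
  have hmk := isClosedMap_quot_mk hs hclosed
  have hmk_eq {z x : Y} : Quot.mk s z = Quot.mk s x ↔ s z x := Quot.eq.trans hs.eqvGen_iff
  refine ⟨fun a b hab => ?_⟩
  obtain ⟨x, rfl⟩ := Quot.exists_rep a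
  obtain ⟨y, rfl⟩ := Quot.exists_rep b
  obtain ⟨P, Q, hP, hQ, hcover, hPx, hQy⟩ := hsep x y fun hxy => hab (Quot.sound hxy)
  refine ⟨(Quot.mk s '' P)ᶜ, (Quot.mk s '' Q)ᶜ, (hmk P hP).isOpen_compl,
    (hmk Q hQ).isOpen_compl, fun ⟨z, hz, hzx⟩ => hPx z hz (hmk_eq.mp hzx),
    fun ⟨z, hz, hzy⟩ => hQy z hz (hmk_eq.mp hzy), Set.disjoint_compl_left_iff_subset.mpr ?_⟩
  rintro c hc
  obtain ⟨z, rfl⟩ := Quot.exists_rep c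
  exact (hcover z z (hs.refl z)).elim (fun hz => ⟨z, hz, rfl⟩) fun hz => (hc ⟨z, hz, rfl⟩).elim

end QuotByClosedEquivalence

namespace IsLSP

variable {X : Type*} [MetricSpace X] {r : Set X → Set X → Prop} {A A' B B' : Set X}

theorem mono_left (hr : IsLSP r) (h : A ⊆ A') (hAB : r A B) : r A' B := by
  simpa [Set.union_eq_self_of_subset_left h] using (hr.union_iff A A' B).mpr (Or.inl hAB)

theorem mono_right (hr : IsLSP r) (h : B ⊆ B') (hAB : r A B) : r A B' :=
  hr.symm _ _ (hr.mono_left h (hr.symm _ _ hAB))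

theorem exists_not_rel_compl (hr : IsLSP r) (h : ¬ r A B) : ∃ C, ¬ r C A ∧ ¬ r Cᶜ B := by
  obtain ⟨C, D, hCD, hCA, hDB⟩ := hr.separation A B h
  exact ⟨C, hCA, fun hC => hDB (hr.mono_left (Set.compl_subset_iff_union.mpr hCD) hC)⟩

theorem not_rel_of_isBounded (hr : IsLSP r) (hB : Bornology.IsBounded B) (C : Set X) :
    ¬ r C B := by
  obtain ⟨M, hMB, hMcB⟩ := hr.exists_not_rel_compl ((hr.not_self_iff_bounded B).mpr hB)
  intro hCB
  have huniv : r (M ∪ Mᶜ) B := by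
    rw [Set.union_compl_self]
    exact hr.mono_left (Set.subset_univ C) hCB
  exact ((hr.union_iff _ _ _).mp huniv).elim hMB hMcB

theorem isBounded_inter_of_not_rel (hr : IsLSP r) (h : ¬ r A B) :
    Bornology.IsBounded (A ∩ B) := by
  by_contra hunb
  have hself := (hr.not_self_iff_bounded (A ∩ B)).not_right.mpr hunb
  exact h (hr.mono_right Set.inter_subset_right (hr.mono_left Set.inter_subset_left hself))

theorem exists_not_rel_compl_compl (hr : IsLSP r) (h : ¬ r A B) :
    ∃ M N : Set X, ¬ r M A ∧ ¬ r N B ∧ ¬ r Mᶜ Nᶜ := by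
  obtain ⟨C, hCA, hCcB⟩ := hr.exists_not_rel_compl h
  obtain ⟨M, hMA, hMcC⟩ := hr.exists_not_rel_compl fun hAC => hCA (hr.symm _ _ hAC)
  obtain ⟨N, hNB, hNcCc⟩ := hr.exists_not_rel_compl fun hBCc => hCcB (hr.symm _ _ hBCc)
  refine ⟨M, N, hMA, hNB, fun hMN => ?_⟩
  -- `Nᶜ ∩ C` is far from `Mᶜ` and `Nᶜ ∩ Cᶜ` is bounded.
  have hsplit : Nᶜ ⊆ C ∪ Nᶜ ∩ Cᶜ := fun x hx => by by_cases hxC : x ∈ C <;> simp [*]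
  rcases (hr.union_iff _ _ _).mp (hr.symm _ _ (hr.mono_right hsplit hMN)) with hC | hbdd
  · exact hMcC (hr.symm _ _ hC)
  · exact hr.not_rel_of_isBounded (hr.isBounded_inter_of_not_rel hNcCc) _ (hr.symm _ _ hbdd)

end IsLSP

namespace IsRUltrafilter

variable {X : Type*} {r : Set X → Set X → Prop}

theorem compl_mem_of_notMem {F : Set (Set X)} (hF : IsRUltrafilter r F) {M : Set X} (hM : M ∉ F) :
    Mᶜ ∈ F :=
  (hF.2.1 M Mᶜ (by simpa using hF.2.2)).resolve_left hM

theorem isClosed_setOf_isRUltrafilter (r : Set X → Set X → Prop) :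
    IsClosed {g : Set X → Bool | IsRUltrafilter r {A | g A = true}} := by
  have hclopen (A : Set X) : IsClopen {g : Set X → Bool | g A = true} :=
    (isClopen_discrete {true}).preimage (continuous_apply (A := fun _ : Set X => Bool) A)
  have hrel (A B : Set X) : IsClosed {g : Set X → Bool | g A = true → g B = true → r A B} :=
    isClosed_imp (hclopen A).isOpen (isClosed_imp (hclopen B).isOpen isClosed_const)
  have hprime (A B : Set X) :
      IsClosed {g : Set X → Bool | g (A ∪ B) = true → g A = true ∨ g B = true} :=
    isClosed_imp (hclopen _).isOpen ((hclopen A).isClosed.union (hclopen B).isClosed)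
  have hset : {g : Set X → Bool | IsRUltrafilter r {A | g A = true}} =
      (⋂ A, ⋂ B, {g | g A = true → g B = true → r A B}) ∩
      (⋂ A, ⋂ B, {g | g (A ∪ B) = true → g A = true ∨ g B = true}) ∩ {g | g Set.univ = true} := by
    ext g
    simp only [IsRUltrafilter, Set.mem_ofPred_eq, Set.mem_inter_iff, Set.mem_iInter]
    exact ⟨fun ⟨h, hp, hu⟩ => ⟨⟨fun A B hA hB => h A hA B hB, hp⟩, hu⟩,
      fun ⟨⟨h, hp⟩, hu⟩ => ⟨fun A hA B hB => h A B hA hB, hp, hu⟩⟩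
  rw [hset]
  exact ((isClosed_iInter fun A => isClosed_iInter (hrel A)).inter
    (isClosed_iInter fun A => isClosed_iInter (hprime A))).inter (hclopen _).isClosed

instance instTopologicalSpace : TopologicalSpace {F : Set (Set X) // IsRUltrafilter r F} :=
  TopologicalSpace.generateFrom {U | ∃ A : Set X, U = {F | A ∉ F.1}}

theorem isOpen_setOf_notMem (A : Set X) :
    IsOpen {F : {F : Set (Set X) // IsRUltrafilter r F} | A ∉ F.1} :=
  TopologicalSpace.isOpen_generateFrom_of_mem ⟨A, rfl⟩

theorem isClosed_setOf_mem (A : Set X) :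
    IsClosed {F : {F : Set (Set X) // IsRUltrafilter r F} | A ∈ F.1} :=
  isOpen_compl_iff.mp (isOpen_setOf_notMem A)

instance instCompactSpace : CompactSpace {F : Set (Set X) // IsRUltrafilter r F} := by
  classical
  let C := {g : Set X → Bool | IsRUltrafilter r {A | g A = true}}
  have : CompactSpace C := isCompact_iff_compactSpace.mp (isClosed_setOf_isRUltrafilter r).isCompact
  let f : C → {F : Set (Set X) // IsRUltrafilter r F} := fun g => ⟨{A | g.1 A = true}, g.2⟩
  have hf : Continuous f := by
    refine continuous_generateFrom_iff.mpr ?_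
    rintro _ ⟨A, rfl⟩
    have hpre : f ⁻¹' {F | A ∉ F.1} = (fun g : C => g.1 A) ⁻¹' {false} := by
      ext g
      simp [f]
    rw [hpre]
    exact (isOpen_discrete _).preimage ((continuous_apply A).comp continuous_subtype_val)
  refine Function.Surjective.compactSpace hf fun F => ⟨⟨fun A => decide (A ∈ F.1), ?_⟩, ?_⟩
  · simpa [C] using F.2
  · simp [f]

end IsRUltrafilter

namespace IsLSP

variable {X : Type*} [MetricSpace X] {r : Set X → Set X → Prop}

theorem equivalence_rUltrafilterRel (hr : IsLSP r) :
    Equivalence fun F G : {F : Set (Set X) // IsRUltrafilter r F} =>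
      ∀ A ∈ F.1, ∀ B ∈ G.1, r A B where
  refl F := F.2.1
  symm hFG A hA B hB := hr.symm _ _ (hFG B hB A hA)
  trans {F G H} hFG hGH A hA C hC := by
    by_contra hAC
    obtain ⟨M, hMA, hMcC⟩ := hr.exists_not_rel_compl hAC
    by_cases hM : M ∈ G.1
    · exact hMA (hr.symm _ _ (hFG A hA M hM))
    · exact hMcC (hGH _ (G.2.compl_mem_of_notMem hM) C hC)

theorem exists_isClosed_separation (hr : IsLSP r) {F G : {F : Set (Set X) // IsRUltrafilter r F}}
    (hFG : ¬ ∀ A ∈ F.1, ∀ B ∈ G.1, r A B) :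
    ∃ P Q : Set {F : Set (Set X) // IsRUltrafilter r F}, IsClosed P ∧ IsClosed Q ∧
      (∀ K H, (∀ A ∈ K.1, ∀ B ∈ H.1, r A B) → K ∈ P ∨ H ∈ Q) ∧
      (∀ K ∈ P, ¬ ∀ A ∈ K.1, ∀ B ∈ F.1, r A B) ∧ (∀ H ∈ Q, ¬ ∀ A ∈ H.1, ∀ B ∈ G.1, r A B) := by
  obtain ⟨A, hA, B, hB, hAB⟩ : ∃ A ∈ F.1, ∃ B ∈ G.1, ¬ r A B := by simpa using hFG
  obtain ⟨M, N, hMA, hNB, hMN⟩ := hr.exists_not_rel_compl_compl hAB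
  refine ⟨{K | M ∈ K.1}, {H | N ∈ H.1}, IsRUltrafilter.isClosed_setOf_mem M,
    IsRUltrafilter.isClosed_setOf_mem N, fun K H hKH => ?_,
    fun K hK hKF => hMA (hKF M hK A hA), fun H hH hHG => hNB (hHG N hH B hB)⟩
  by_contra! hout
  exact hMN (hKH _ (K.2.compl_mem_of_notMem hout.1) _ (H.2.compl_mem_of_notMem hout.2))

end IsLSP

theorem rBoundary_compact_hausdorff_general {X : Type*} [MetricSpace X]
    (r : Set X → Set X → Prop) (hr : IsLSP r) :
    let δr := {F : Set (Set X) // IsRUltrafilter r F}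
    let t : TopologicalSpace δr :=
      TopologicalSpace.generateFrom {U : Set δr | ∃ A : Set X, U = {F : δr | A ∉ F.1}}
    let lam : δr → δr → Prop := fun F G => ∀ A ∈ F.1, ∀ B ∈ G.1, r A B
    let tq : TopologicalSpace (Quot lam) := TopologicalSpace.coinduced (Quot.mk lam) t
    @CompactSpace (Quot lam) tq ∧ @T2Space (Quot lam) tq :=
  ⟨Quot.compactSpace, t2Space_quot_of_separating hr.equivalence_rUltrafilterRel
    fun _ _ hFG => hr.exists_isClosed_separation hFG⟩

/-- the quotient `∂'_r X = δ_r X / λ_r` is a compact Hausdorff space. -/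
theorem rBoundary_compact_hausdorff {X : Type*} [MetricSpace X] [ProperSpace X]
    (r : Set X → Set X → Prop) (hr : IsLSP r) :
    let δr := {F : Set (Set X) // IsRUltrafilter r F}
    let t : TopologicalSpace δr :=
      TopologicalSpace.generateFrom {U : Set δr | ∃ A : Set X, U = {F : δr | A ∉ F.1}}
    let lam : δr → δr → Prop := fun F G => ∀ A ∈ F.1, ∀ B ∈ G.1, r A B
    let tq : TopologicalSpace (Quot lam) := TopologicalSpace.coinduced (Quot.mk lam) t
    @CompactSpace (Quot lam) tq ∧ @T2Space (Quot lam) tq :=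
  rBoundary_compact_hausdorff_general r hr
end

section
/- Let X be a proper metric space. In the real Banach algebra of bounded continuous functions X → ℝ with the sup norm, let 𝒜 be the subalgebra generated by the constant function 1 together with all functions φ_{A,B}(x) = d(x,A)/(d(x,A) + d(x,B)), where A, B range over nonempty subsets of X with d(A,B) > 0 and ¬(A ≍ B). Then the closure of 𝒜 in the sup norm equals the set of all Higson functions on X. -/
/-!
Higson functions are the bounded continuous functions that oscillate slowly at infinity, and
these form a closed subalgebra. It contains every `φ_{A,B}`: its variation between `x` and `y`
is at most `d(x,y) / (d(x,A) + d(x,B))`, and since `A` and `B` are not close the denominator is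
large off a bounded set. Conversely, for a Higson `f` the sets `{f ≤ s}` and `{f ≥ s + δ}` are
closed, disjoint and not close, hence (the space being proper) uniformly separated, and the
corresponding `φ_{A,B}` is a step from `0` to `1` across the band `s < f < s + δ`. A sum of
such steps at levels spaced by `δ` approximates `f` uniformly within `δ`.
-/

open Topology

open Metric Bornology Filter Set
open scoped BoundedContinuousFunction

lemma sum_range_eq_of_eq_one_of_eq_zero {a : ℕ → ℝ} {j N : ℕ} (hjN : j < N)
    (h_one : ∀ k < j, a k = 1) (h_zero : ∀ k, j < k → k < N → a k = 0) :
    ∑ k ∈ Finset.range N, a k = j + a j := by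
  rw [← Finset.sum_range_add_sum_Ico a hjN, Finset.sum_range_succ,
    Finset.sum_eq_zero fun k hk => h_zero k (Finset.mem_Ico.1 hk).1 (Finset.mem_Ico.1 hk).2,
    Finset.sum_congr rfl fun k hk => h_one k (Finset.mem_range.1 hk)]
  simp

lemma abs_div_add_sub_div_add_le {u v u' v' d : ℝ} (hu' : 0 ≤ u') (hv' : 0 ≤ v')
    (huv : 0 < u + v) (huv' : 0 < u' + v') (hu : |u - u'| ≤ d) (hv : |v - v'| ≤ d) :
    |u / (u + v) - u' / (u' + v')| ≤ d / (u + v) := by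
  have hnum : |u * (u' + v') - (u + v) * u'| ≤ (u' + v') * d :=
    calc |u * (u' + v') - (u + v) * u'| = |v' * (u - u') + u' * (v' - v)| := by ring_nf
      _ ≤ v' * |u - u'| + u' * |v - v'| := by
          grw [abs_add_le, abs_mul, abs_mul, abs_of_nonneg hu', abs_of_nonneg hv', abs_sub_comm v']
      _ ≤ (u' + v') * d := by nlinarith
  rw [div_sub_div _ _ huv.ne' huv'.ne', abs_div, abs_of_pos (mul_pos huv huv'),
    div_le_div_iff₀ (mul_pos huv huv') huv]
  nlinarith

section Approximation

variable {X : Type*} [TopologicalSpace X]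

lemma BoundedContinuousFunction.mem_closure_of_forall_exists_step
    {S : Subalgebra ℝ (X →ᵇ ℝ)} {f : X →ᵇ ℝ}
    (h : ∀ s δ : ℝ, 0 < δ → ∃ ψ ∈ S, (∀ x, ψ x ∈ Icc 0 1) ∧
      (∀ x, f x ≤ s → ψ x = 0) ∧ (∀ x, s + δ ≤ f x → ψ x = 1)) :
    f ∈ closure (S : Set (X →ᵇ ℝ)) := by
  refine Metric.mem_closure_iff.2 fun ε hε => ?_
  set δ := ε / 2
  have hδ : 0 < δ := half_pos hε
  set C := ‖f‖
  have hfC : ∀ x, |f x| ≤ C := fun x => by simpa using f.norm_coe_le_norm x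
  set t : ℕ → ℝ := fun k => -C + k * δ
  have ht_succ : ∀ k, t k + δ = t (k + 1) := fun k => by simp only [t]; push_cast; ring
  have ht_mono : Monotone t := fun j k hjk => by simp only [t]; gcongr
  choose ψ hψS hψ01 hψ0 hψ1 using fun k => h (t k) δ hδ
  set N := ⌈2 * C / δ⌉₊ + 1
  refine ⟨(-C) • 1 + ∑ k ∈ Finset.range N, δ • ψ k,
    S.add_mem (S.smul_mem S.one_mem _) (S.sum_mem fun k _ => S.smul_mem (hψS k) _),
    lt_of_le_of_lt ((BoundedContinuousFunction.dist_le hδ.le).2 fun x => ?_) (half_lt_self hε)⟩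
  set j := ⌊(f x + C) / δ⌋₊
  have hfC' : 0 ≤ f x + C := by linarith [(abs_le.1 (hfC x)).1]
  have htj : t j ≤ f x := by
    have := Nat.floor_le (div_nonneg hfC' hδ.le)
    rw [le_div_iff₀ hδ] at this
    simp only [t]; linarith
  have htj' : f x < t j + δ := by
    have := Nat.lt_floor_add_one ((f x + C) / δ)
    rw [div_lt_iff₀ hδ] at this
    simp only [t]; linarith
  have hjN : j < N := Nat.lt_succ_of_le <| (Nat.floor_le_floor (by
    gcongr; linarith [(abs_le.1 (hfC x)).2])).trans (Nat.floor_le_ceil _)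
  have hsum : ∑ k ∈ Finset.range N, ψ k x = j + ψ j x := by
    refine sum_range_eq_of_eq_one_of_eq_zero hjN (fun k hk => hψ1 k x ?_)
      (fun k hk _ => hψ0 k x ?_)
    · rw [ht_succ]; exact (ht_mono hk).trans htj
    · rw [ht_succ] at htj'; exact htj'.le.trans (ht_mono hk)
  have hgx : ((-C) • 1 + ∑ k ∈ Finset.range N, δ • ψ k : X →ᵇ ℝ) x = t j + δ * ψ j x := by
    simp only [BoundedContinuousFunction.coe_add, BoundedContinuousFunction.coe_smul,
      BoundedContinuousFunction.coe_sum, BoundedContinuousFunction.coe_one, Pi.add_apply,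
      Finset.sum_apply, Pi.one_apply, smul_eq_mul, ← Finset.mul_sum, hsum, t]
    ring
  rw [hgx, Real.dist_eq, abs_le]
  have hδψ : 0 ≤ δ * ψ j x ∧ δ * ψ j x ≤ δ :=
    ⟨mul_nonneg hδ.le (hψ01 j x).1, mul_le_of_le_one_right hδ.le (hψ01 j x).2⟩
  constructor <;> linarith

end Approximation

section MetricSpace

variable {X : Type*} [MetricSpace X]

lemma exists_seq_not_isBounded_range {S : Set X} (hS : ¬ IsBounded S) :
    ∃ u : ℕ → X, (∀ n, u n ∈ S) ∧ ¬ IsBounded (range u) := by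
  obtain ⟨x₀, -⟩ := nonempty_of_not_isBounded hS
  have hfar : ∀ n : ℕ, ∃ x ∈ S, (n : ℝ) < dist x x₀ := fun n => by
    by_contra! hnear
    exact hS ((isBounded_iff_subset_closedBall x₀).2 ⟨n, hnear⟩)
  choose u huS hu using hfar
  refine ⟨u, huS, fun hbdd => ?_⟩
  obtain ⟨r, hr⟩ := (isBounded_iff_subset_closedBall x₀).1 hbdd
  obtain ⟨n, hn⟩ := exists_nat_ge r
  exact (hu n).not_ge ((hr (mem_range_self n)).out.trans hn)

lemma close_iff_exists_not_isBounded {A B : Set X} :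
    Close A B ↔ ∃ R, ¬ IsBounded {a ∈ A | ∃ b ∈ B, dist a b ≤ R} := by
  constructor
  · rintro ⟨R, -, a, b, ha, hb, hab, hunb⟩
    exact ⟨R, fun hbdd =>
      hunb (hbdd.subset (range_subset_iff.2 fun n => ⟨ha n, b n, hb n, hab n⟩))⟩
  · rintro ⟨R, hR⟩
    obtain ⟨a, ha, hunb⟩ := exists_seq_not_isBounded_range hR
    choose haA b hbB hab using ha
    exact ⟨max R 0, le_max_right _ _, a, b, haA, hbB,
      fun n => (hab n).trans (le_max_left _ _), hunb⟩

/-- The part of `A` within distance `1` of `B` is relatively compact, and compact sets are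
uniformly separated from disjoint closed sets. -/
lemma exists_pos_le_dist_of_not_close [ProperSpace X] {A B : Set X} (hA : IsClosed A)
    (hB : IsClosed B) (hAB : Disjoint A B) (h : ¬ Close A B) :
    ∃ ε > 0, ∀ a ∈ A, ∀ b ∈ B, ε ≤ dist a b := by
  set T := {a ∈ A | ∃ b ∈ B, dist a b ≤ 1}
  have hT : IsBounded T := by
    by_contra hT
    exact h (close_iff_exists_not_isBounded.2 ⟨1, hT⟩)
  have hTA : closure T ⊆ A := closure_minimal (sep_subset _ _) hA
  obtain ⟨r, hr, hrT⟩ :=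
    Metric.exists_pos_forall_lt_edist hT.isCompact_closure hB (hAB.mono_left hTA)
  refine ⟨min r 1, lt_min hr one_pos, fun a ha b hb => ?_⟩
  by_cases hab : dist a b ≤ 1
  · have hlt := hrT a (subset_closure ⟨ha, b, hb, hab⟩) b hb
    rw [edist_dist, ← ENNReal.ofReal_coe_nnreal, ENNReal.ofReal_lt_ofReal_iff'] at hlt
    exact (min_le_left _ _).trans hlt.1.le
  · exact (min_le_right _ _).trans (not_le.1 hab).le

lemma le_infDist_add_infDist {A B : Set X} (hA : A.Nonempty) (hB : B.Nonempty) {ε : ℝ}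
    (hAB : ∀ a ∈ A, ∀ b ∈ B, ε ≤ dist a b) (x : X) : ε ≤ infDist x A + infDist x B := by
  have : ε - infDist x B ≤ infDist x A := (le_infDist hA).2 fun a ha => by
    have h₁ : ε ≤ infDist a B := (le_infDist hB).2 (hAB a ha)
    have h₂ : infDist a B ≤ infDist x B + dist a x := infDist_le_infDist_add_dist
    rw [dist_comm] at h₂
    linarith
  linarith

lemma isBounded_setOf_infDist_add_infDist_le {A B : Set X} (hA : A.Nonempty)
    (hB : B.Nonempty) (h : ¬ Close A B) (M : ℝ) :
    IsBounded {x | infDist x A + infDist x B ≤ M} := by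
  have hT : IsBounded {a ∈ A | ∃ b ∈ B, dist a b ≤ 2 * (M + 1)} := by
    by_contra hT
    exact h (close_iff_exists_not_isBounded.2 ⟨_, hT⟩)
  refine (hT.thickening (δ := M + 1)).subset fun x (hx : _ ≤ M) => ?_
  have hxA : infDist x A < M + 1 := by linarith [infDist_nonneg (x := x) (s := B)]
  have hxB : infDist x B < M + 1 := by linarith [infDist_nonneg (x := x) (s := A)]
  obtain ⟨a, ha, hxa⟩ := (infDist_lt_iff hA).1 hxA
  obtain ⟨b, hb, hxb⟩ := (infDist_lt_iff hB).1 hxB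
  refine mem_thickening_iff.2 ⟨a, ⟨ha, b, hb, ?_⟩, hxa⟩
  linarith [dist_triangle_left a b x]

end MetricSpace

section Higson

variable {X : Type*} [MetricSpace X]

def SlowlyOscillating (φ : X → ℝ) : Prop :=
  ∀ R ε : ℝ, 0 < ε → ∀ᶠ x in cobounded X, ∀ y, dist x y ≤ R → |φ x - φ y| < ε

lemma isHigson_iff {φ : X → ℝ} :
    IsHigson φ ↔ Continuous φ ∧ (∃ C, ∀ x, |φ x| ≤ C) ∧ SlowlyOscillating φ := by
  refine and_congr_right' (and_congr_right' ⟨fun h R ε hε => ?_, fun h E ⟨C, hC⟩ ε hε => ?_⟩)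
  · obtain ⟨B, hB, hBε⟩ := h {p | dist p.1 p.2 ≤ R} ⟨R, fun p hp => hp⟩ ε hε
    filter_upwards [isBounded_def.1 hB] with x hx y hxy using hBε (x, y) hxy (Or.inl hx)
  · refine ⟨{x | ∀ y, dist x y ≤ C → |φ x - φ y| < ε}ᶜ,
      isBounded_def.2 (by rw [compl_compl]; exact h C ε hε), ?_⟩
    rintro ⟨x, y⟩ hxy (hx | hy)
    · exact not_not.1 hx y (hC _ hxy)
    · rw [abs_sub_comm]
      exact not_not.1 hy x (dist_comm x y ▸ hC _ hxy)

lemma BoundedContinuousFunction.isHigson_iff (f : X →ᵇ ℝ) :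
    IsHigson f ↔ SlowlyOscillating f := by
  rw [_root_.isHigson_iff, and_iff_right f.continuous, and_iff_right_iff_imp]
  exact fun _ => ⟨‖f‖, fun x => by simpa using f.norm_coe_le_norm x⟩

lemma slowlyOscillating_const (c : ℝ) : SlowlyOscillating fun _ : X => c :=
  fun _ _ hε => Eventually.of_forall fun _ _ _ => by simpa using hε

lemma SlowlyOscillating.add {f g : X → ℝ} (hf : SlowlyOscillating f)
    (hg : SlowlyOscillating g) : SlowlyOscillating (f + g) := fun R ε hε => by
  filter_upwards [hf R (ε / 2) (half_pos hε), hg R (ε / 2) (half_pos hε)] with x hfx hgx y hxy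
  calc |(f + g) x - (f + g) y| = |(f x - f y) + (g x - g y)| := by simp only [Pi.add_apply]; ring_nf
    _ ≤ |f x - f y| + |g x - g y| := abs_add_le _ _
    _ < ε := by linarith [hfx y hxy, hgx y hxy]

lemma SlowlyOscillating.mul {f g : X →ᵇ ℝ} (hf : SlowlyOscillating f)
    (hg : SlowlyOscillating g) : SlowlyOscillating ⇑(f * g) := fun R ε hε => by
  set η := ε / (‖f‖ + ‖g‖ + 1)
  have hη : 0 < η := by positivity
  filter_upwards [hf R η hη, hg R η hη] with x hfx hgx y hxy
  calc |(f * g) x - (f * g) y| = |f x * (g x - g y) + g y * (f x - f y)| := by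
        simp only [BoundedContinuousFunction.coe_mul, Pi.mul_apply]; ring_nf
    _ ≤ |f x| * |g x - g y| + |g y| * |f x - f y| := by
        rw [← abs_mul, ← abs_mul]; exact abs_add_le _ _
    _ ≤ ‖f‖ * η + ‖g‖ * η := by
        gcongr
        exacts [by simpa using f.norm_coe_le_norm x, (hgx y hxy).le,
          by simpa using g.norm_coe_le_norm y, (hfx y hxy).le]
    _ < (‖f‖ + ‖g‖ + 1) * η := by nlinarith
    _ = ε := mul_div_cancel₀ _ (by positivity)

variable (X) in
def higsonSubalgebra : Subalgebra ℝ (X →ᵇ ℝ) where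
  carrier := {f | SlowlyOscillating f}
  mul_mem' hf hg := hf.mul hg
  add_mem' hf hg := hf.add hg
  algebraMap_mem' c := by
    show SlowlyOscillating _
    convert slowlyOscillating_const (X := X) c using 2
    simp [BoundedContinuousFunction.algebraMap_apply]

lemma isClosed_higsonSubalgebra : IsClosed (higsonSubalgebra X : Set (X →ᵇ ℝ)) := by
  refine isClosed_of_closure_subset fun f hf R ε hε => ?_
  obtain ⟨g, hg, hfg⟩ := Metric.mem_closure_iff.1 hf (ε / 3) (by positivity)
  filter_upwards [hg R (ε / 3) (by positivity)] with x hgx y hxy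
  have hx := (BoundedContinuousFunction.dist_coe_le_dist x).trans_lt hfg
  have hy := (BoundedContinuousFunction.dist_coe_le_dist y).trans_lt hfg
  rw [Real.dist_eq, abs_lt] at hx hy
  have := abs_lt.1 (hgx y hxy)
  rw [abs_lt]
  constructor <;> linarith

end Higson

section Generators

variable {X : Type*} [MetricSpace X]

lemma slowlyOscillating_infDist_div {A B : Set X} (hA : A.Nonempty) (hB : B.Nonempty)
    {ε₀ : ℝ} (hε₀ : 0 < ε₀) (hAB : ∀ a ∈ A, ∀ b ∈ B, ε₀ ≤ dist a b) (h : ¬ Close A B) :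
    SlowlyOscillating fun x => infDist x A / (infDist x A + infDist x B) := fun R ε hε => by
  have hpos x : 0 < infDist x A + infDist x B :=
    hε₀.trans_le (le_infDist_add_infDist hA hB hAB x)
  have hlip (S : Set X) (x y : X) : |infDist x S - infDist y S| ≤ dist x y := by
    simpa [Real.dist_eq] using (lipschitz_infDist_pt S).dist_le_mul x y
  filter_upwards [isBounded_def.1 (isBounded_setOf_infDist_add_infDist_le hA hB h (R / ε))]
    with x hx y hxy
  have hRx : R < ε * (infDist x A + infDist x B) := by
    rw [← div_lt_iff₀' hε]
    exact not_le.1 hx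
  calc _ ≤ dist x y / (infDist x A + infDist x B) :=
        abs_div_add_sub_div_add_le infDist_nonneg infDist_nonneg (hpos x) (hpos y)
          (hlip A x y) (hlip B x y)
    _ ≤ R / (infDist x A + infDist x B) := div_le_div_of_nonneg_right hxy (hpos x).le
    _ < ε := by rwa [div_lt_iff₀ (hpos x)]

lemma SlowlyOscillating.not_close_setOf_le_setOf_add_le {f : X → ℝ}
    (hf : SlowlyOscillating f) (s : ℝ) {δ : ℝ} (hδ : 0 < δ) :
    ¬ Close {x | f x ≤ s} {x | s + δ ≤ f x} := fun hclose => by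
  obtain ⟨R, hR⟩ := close_iff_exists_not_isBounded.1 hclose
  have hfreq : ∃ᶠ a in cobounded X, f a ≤ s ∧ ∃ b, s + δ ≤ f b ∧ dist a b ≤ R :=
    fun h => hR (isBounded_def.2 h)
  obtain ⟨a, hosc, has, b, hbs, hab⟩ := ((hf R δ hδ).and_frequently hfreq).exists
  have := abs_lt.1 (hosc b hab)
  linarith

variable (X) in
/-- The functions `φ_{A,B}` of the statement. -/
def phiGenerators : Set (X →ᵇ ℝ) :=
  {f | ∃ A B : Set X, A.Nonempty ∧ B.Nonempty ∧
    (∃ ε > (0:ℝ), ∀ a ∈ A, ∀ b ∈ B, ε ≤ dist a b) ∧ ¬ Close A B ∧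
    ∀ x : X, f x = infDist x A / (infDist x A + infDist x B)}

lemma phiGenerators_subset_higsonSubalgebra :
    phiGenerators X ⊆ higsonSubalgebra X := by
  rintro f ⟨A, B, hA, hB, ⟨ε, hε, hAB⟩, hclose, hf⟩
  show SlowlyOscillating f
  rw [show ⇑f = _ from funext hf]
  exact slowlyOscillating_infDist_div hA hB hε hAB hclose

lemma exists_mem_phiGenerators {A B : Set X} (hA : A.Nonempty) (hB : B.Nonempty)
    {ε : ℝ} (hε : 0 < ε) (hAB : ∀ a ∈ A, ∀ b ∈ B, ε ≤ dist a b) (h : ¬ Close A B) :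
    ∃ φ ∈ phiGenerators X, (∀ x, φ x ∈ Icc 0 1) ∧ (∀ x ∈ A, φ x = 0) ∧ (∀ x ∈ B, φ x = 1) := by
  have hpos x : ε ≤ infDist x A + infDist x B := le_infDist_add_infDist hA hB hAB x
  have hmem x : infDist x A / (infDist x A + infDist x B) ∈ Icc 0 1 :=
    ⟨div_nonneg infDist_nonneg (hε.le.trans (hpos x)),
      div_le_one_of_le₀ (le_add_of_nonneg_right infDist_nonneg) (hε.le.trans (hpos x))⟩
  have hcont : Continuous fun x => infDist x A / (infDist x A + infDist x B) :=
    (continuous_infDist_pt A).div ((continuous_infDist_pt A).add (continuous_infDist_pt B))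
      fun x => (hε.trans_le (hpos x)).ne'
  refine ⟨.ofNormedAddCommGroup _ hcont 1 fun x => by
      rw [Real.norm_eq_abs, abs_le]; exact ⟨by linarith [(hmem x).1], (hmem x).2⟩,
    ⟨A, B, hA, hB, ⟨ε, hε, hAB⟩, h, fun _ => rfl⟩, hmem, fun x hx => ?_, fun x hx => ?_⟩
  · simp [infDist_zero_of_mem hx]
  · have hxA := hpos x
    rw [infDist_zero_of_mem hx, add_zero] at hxA
    simp [infDist_zero_of_mem hx, (hε.trans_le hxA).ne']

lemma exists_mem_adjoin_phiGenerators_step [ProperSpace X] {f : X →ᵇ ℝ}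
    (hf : SlowlyOscillating f) (s : ℝ) {δ : ℝ} (hδ : 0 < δ) :
    ∃ ψ ∈ Algebra.adjoin ℝ (insert 1 (phiGenerators X)), (∀ x, ψ x ∈ Icc 0 1) ∧
      (∀ x, f x ≤ s → ψ x = 0) ∧ (∀ x, s + δ ≤ f x → ψ x = 1) := by
  set A := {x | f x ≤ s}
  set B := {x | s + δ ≤ f x}
  rcases A.eq_empty_or_nonempty with hA | hA
  · exact ⟨1, one_mem _, by simp, fun x hx => (hA.subset hx).elim, by simp⟩
  rcases B.eq_empty_or_nonempty with hB | hB
  · exact ⟨0, zero_mem _, by simp, by simp, fun x hx => (hB.subset hx).elim⟩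
  have hclose : ¬ Close A B := hf.not_close_setOf_le_setOf_add_le s hδ
  have hdisj : Disjoint A B := disjoint_left.2 fun x (hxA : f x ≤ s) (hxB : s + δ ≤ f x) => by
    linarith
  obtain ⟨ε, hε, hAB⟩ := exists_pos_le_dist_of_not_close
    (isClosed_le f.continuous continuous_const) (isClosed_le continuous_const f.continuous)
    hdisj hclose
  obtain ⟨φ, hφ, hφ01, hφA, hφB⟩ := exists_mem_phiGenerators hA hB hε hAB hclose
  exact ⟨φ, Algebra.subset_adjoin (mem_insert_of_mem _ hφ), hφ01, hφA, hφB⟩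

end Generators

/-- the closure of the subalgebra of bounded continuous functions generated
by `1` and the functions `φ_{A,B}` is exactly the set of Higson functions. -/
theorem closure_adjoin_phiAB_eq_higson {X : Type*} [MetricSpace X] [ProperSpace X] :
    closure ((Algebra.adjoin ℝ
        (insert (1 : BoundedContinuousFunction X ℝ)
          {f : BoundedContinuousFunction X ℝ | ∃ A B : Set X, A.Nonempty ∧ B.Nonempty ∧
            (∃ ε > (0:ℝ), ∀ a ∈ A, ∀ b ∈ B, ε ≤ dist a b) ∧ ¬ Close A B ∧
            ∀ x : X, f x =
              Metric.infDist x A / (Metric.infDist x A + Metric.infDist x B)}) :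
        Subalgebra ℝ (BoundedContinuousFunction X ℝ)) : Set (BoundedContinuousFunction X ℝ))
      = {f : BoundedContinuousFunction X ℝ | IsHigson ⇑f} := by
  change closure (Algebra.adjoin ℝ (insert 1 (phiGenerators X)) : Set (X →ᵇ ℝ)) = _
  have hHigson : {f : X →ᵇ ℝ | IsHigson ⇑f} = higsonSubalgebra X :=
    Set.ext fun f => f.isHigson_iff
  rw [hHigson]
  refine Subset.antisymm ?_ fun f hf => ?_
  · exact closure_minimal (Algebra.adjoin_le (insert_subset (one_mem _)
      phiGenerators_subset_higsonSubalgebra)) isClosed_higsonSubalgebra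
  · exact BoundedContinuousFunction.mem_closure_of_forall_exists_step fun s δ hδ =>
      exists_mem_adjoin_phiGenerators_step hf s hδ
end

section
/- Let X be a proper geodesic metric space. Then (a) X is rim-compact: every point of X has a neighborhood basis of open sets whose topological boundary is compact; and (b) for all subsets A, B ⊆ X, the following are equivalent: (i) there is NO compact set K ⊆ X together with disjoint open sets G, H ⊆ X such that X ∖ K = G ∪ H, closure(A) ⊆ G and closure(B) ⊆ H; (ii) closure(A) ∩ closure(B) ≠ ∅ (closures in X), or A ≍_f B. -/
open Topology

/-!
Balls have compact frontiers in a proper space. If `A' ⊇ A` and `B' ⊇ B` cover `X` and are not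
close, then the pairs of points of `A'` and `B'` at distance at most `1` stay in a compact set `D`;
a small thickening of `A ∪ (A' \ D)` and of `B ∪ (B' \ D)` then gives disjoint open sets around
`closure A` and `closure B` whose union misses only a compact set. Conversely, given such a
separation `Kᶜ = G ∪ H`, a geodesic from a point of `G` to a point of `H` has to cross `K`, so
points of `G ∪ K` near `H` stay near the compact set `K`, and `G ∪ K`, `H` are not close.
-/

open Metric Bornology Set

section Close

variable {X : Type*} [MetricSpace X]

theorem exists_seq_mem_not_isBounded_range {S : Set X} (hS : ¬ IsBounded S) :
    ∃ a : ℕ → X, (∀ n, a n ∈ S) ∧ ¬ IsBounded (range a) := by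
  obtain ⟨c, -⟩ := nonempty_of_not_isBounded hS
  have hfar : ∀ n : ℕ, ∃ x ∈ S, (n : ℝ) < dist x c := by
    intro n
    by_contra! h
    exact hS ((isBounded_iff_subset_closedBall c).2 ⟨n, h⟩)
  choose a haS ha using hfar
  refine ⟨a, haS, fun hbdd => ?_⟩
  obtain ⟨r, hr⟩ := (isBounded_iff_subset_closedBall c).1 hbdd
  obtain ⟨n, hn⟩ := exists_nat_gt r
  exact (ha n).not_ge ((hr (mem_range_self n)).trans hn.le)

theorem isBounded_range_of_dist_le {a b : ℕ → X} {R : ℝ} (hd : ∀ n, dist (a n) (b n) ≤ R)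
    (ha : IsBounded (range a)) : IsBounded (range b) := by
  obtain ⟨C, hC⟩ := isBounded_range_iff.1 ha
  refine isBounded_range_iff.2 ⟨R + C + R, fun m n => ?_⟩
  calc dist (b m) (b n) ≤ dist (b m) (a m) + dist (a m) (a n) + dist (a n) (b n) :=
        dist_triangle4 _ _ _ _
    _ ≤ R + C + R := by gcongr <;> simp only [dist_comm (b m), hd, hC]

theorem Close.symm {A B : Set X} (h : Close A B) : Close B A := by
  obtain ⟨R, hR, a, b, ha, hb, hd, hunb⟩ := h
  have hd' : ∀ n, dist (b n) (a n) ≤ R := fun n => dist_comm (a n) (b n) ▸ hd n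
  exact ⟨R, hR, b, a, hb, ha, hd', fun hbdd => hunb (isBounded_range_of_dist_le hd' hbdd)⟩

theorem isBounded_of_not_close {A B : Set X} (h : ¬ Close A B) {R : ℝ} (hR : 0 ≤ R) :
    IsBounded {a | a ∈ A ∧ ∃ b ∈ B, dist a b ≤ R} := by
  by_contra hS
  obtain ⟨a, haS, hunb⟩ := exists_seq_mem_not_isBounded_range hS
  choose b hb hd using fun n => (haS n).2
  exact h ⟨R, hR, a, b, fun n => (haS n).1, hb, hd, hunb⟩

theorem exists_isCompact_forall_dist_le_of_not_close [ProperSpace X] {A B : Set X}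
    (h : ¬ Close A B) {R : ℝ} (hR : 0 ≤ R) :
    ∃ D : Set X, IsCompact D ∧ ∀ a ∈ A, ∀ b ∈ B, dist a b ≤ R → a ∈ D ∧ b ∈ D := by
  refine ⟨closure ({a | a ∈ A ∧ ∃ b ∈ B, dist a b ≤ R} ∪ {b | b ∈ B ∧ ∃ a ∈ A, dist b a ≤ R}),
    ((isBounded_of_not_close h hR).union
      (isBounded_of_not_close (mt Close.symm h) hR)).isCompact_closure,
    fun a ha b hb hab => ⟨subset_closure (Or.inl ⟨ha, b, hb, hab⟩),
      subset_closure (Or.inr ⟨hb, a, ha, dist_comm a b ▸ hab⟩)⟩⟩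

theorem exists_compact_separation_of_not_close [ProperSpace X] {A B A' B' : Set X}
    (hA : A ⊆ A') (hB : B ⊆ B') (hcover : A' ∪ B' = univ) (hnc : ¬ Close A' B')
    (hdisj : Disjoint (closure A) (closure B)) :
    ∃ K G H : Set X, IsCompact K ∧ IsOpen G ∧ IsOpen H ∧ Disjoint G H ∧
      Kᶜ = G ∪ H ∧ closure A ⊆ G ∧ closure B ⊆ H := by
  obtain ⟨D, hD, hnear⟩ := exists_isCompact_forall_dist_le_of_not_close hnc zero_le_one
  obtain ⟨δ, hδ, hδdisj⟩ := (hdisj.mono_left inter_subset_left).exists_thickenings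
    (hD.inter_left isClosed_closure) isClosed_closure
  set η := min δ (1 / 2)
  have hη : 0 < η := lt_min hδ one_half_pos
  set G := thickening η (A ∪ (A' \ D))
  set H := thickening η (B ∪ (B' \ D))
  have hGH : Disjoint G H := by
    refine disjoint_left.2 fun x hxG hxH => ?_
    obtain ⟨s, hs, hxs⟩ := mem_thickening_iff.1 hxG
    obtain ⟨t, ht, hxt⟩ := mem_thickening_iff.1 hxH
    have hst : dist s t ≤ 1 := by
      linarith [dist_triangle_left s t x, min_le_right δ (1 / 2)]
    obtain ⟨hsD, htD⟩ := hnear s (hs.elim (@hA s) (·.1)) t (ht.elim (@hB t) (·.1)) hst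
    have hsA : s ∈ A := hs.resolve_right fun h => h.2 hsD
    have htB : t ∈ B := ht.resolve_right fun h => h.2 htD
    exact disjoint_left.1 hδdisj
      (mem_thickening_iff.2 ⟨s, ⟨subset_closure hsA, hsD⟩, hxs.trans_le (min_le_left _ _)⟩)
      (mem_thickening_iff.2 ⟨t, subset_closure htB, hxt.trans_le (min_le_left _ _)⟩)
  have hKD : (G ∪ H)ᶜ ⊆ D := by
    intro x hx
    by_contra hxD
    refine hx ?_
    rcases (hcover ▸ mem_univ x : x ∈ A' ∪ B') with hxA | hxB
    · exact Or.inl (self_subset_thickening hη _ (Or.inr ⟨hxA, hxD⟩))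
    · exact Or.inr (self_subset_thickening hη _ (Or.inr ⟨hxB, hxD⟩))
  refine ⟨(G ∪ H)ᶜ, G, H,
    hD.of_isClosed_subset (isOpen_thickening.union isOpen_thickening).isClosed_compl hKD,
    isOpen_thickening, isOpen_thickening, hGH, compl_compl _, ?_, ?_⟩
  · exact (closure_subset_thickening hη A).trans (thickening_subset_of_subset η subset_union_left)
  · exact (closure_subset_thickening hη B).trans (thickening_subset_of_subset η subset_union_left)

end Close

theorem isCompact_frontier_ball {X : Type*} [MetricSpace X] [ProperSpace X] (x : X) (r : ℝ) :
    IsCompact (frontier (ball x r)) :=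
  (isCompact_sphere x r).of_isClosed_subset isClosed_frontier frontier_ball_subset_sphere

namespace IsGeodesicSpace

variable {X : Type*} [MetricSpace X] (hgeo : IsGeodesicSpace X)
include hgeo

theorem exists_isPreconnected (x y : X) :
    ∃ S : Set X, IsPreconnected S ∧ x ∈ S ∧ y ∈ S ∧ ∀ z ∈ S, dist x z ≤ dist x y := by
  obtain ⟨γ, hγ0, hγ1, hγ⟩ := hgeo x y
  have hmem0 : (0 : ℝ) ∈ Icc 0 (dist x y) := ⟨le_rfl, dist_nonneg⟩
  have hlip : LipschitzOnWith 1 γ (Icc 0 (dist x y)) :=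
    LipschitzOnWith.of_dist_le_mul fun s hs t ht => by simp [hγ s hs t ht, Real.dist_eq]
  refine ⟨γ '' Icc 0 (dist x y), isPreconnected_Icc.image γ hlip.continuousOn,
    ⟨0, hmem0, hγ0⟩, ⟨_, ⟨dist_nonneg, le_rfl⟩, hγ1⟩, ?_⟩
  rintro _ ⟨t, ht, rfl⟩
  have hdist := hγ 0 hmem0 t ht
  rw [hγ0] at hdist
  rw [hdist, zero_sub, abs_neg, abs_of_nonneg ht.1]
  exact ht.2

theorem exists_mem_dist_le_of_separation {K G H : Set X} (hG : IsOpen G) (hH : IsOpen H)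
    (hGH : Disjoint G H) (hKc : Kᶜ ⊆ G ∪ H) {x y : X} (hx : x ∈ G) (hy : y ∈ H) :
    ∃ k ∈ K, dist x k ≤ dist x y := by
  obtain ⟨S, hS, hxS, hyS, hSx⟩ := hgeo.exists_isPreconnected x y
  by_contra! hfar
  have hSGH : S ⊆ G ∪ H := fun z hz => hKc fun hzK => (hfar z hzK).not_ge (hSx z hz)
  obtain ⟨z, -, hzG, hzH⟩ := hS G H hG hH hSGH ⟨x, hxS, hx⟩ ⟨y, hyS, hy⟩
  exact disjoint_left.1 hGH hzG hzH

theorem not_close_of_separation {K G H : Set X} (hK : IsCompact K) (hG : IsOpen G)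
    (hH : IsOpen H) (hGH : Disjoint G H) (hKc : Kᶜ ⊆ G ∪ H) : ¬ Close (G ∪ K) H := by
  rintro ⟨R, hR, a, b, ha, hb, hd, hunb⟩
  refine hunb ((hK.isBounded.cthickening (δ := R)).subset (range_subset_iff.2 fun n => ?_))
  rcases ha n with haG | haK
  · obtain ⟨k, hk, hak⟩ := hgeo.exists_mem_dist_le_of_separation hG hH hGH hKc haG (hb n)
    exact mem_cthickening_of_dist_le _ k R K hk (hak.trans (hd n))
  · exact mem_cthickening_of_dist_le _ _ R K haK (by simpa using hR)

theorem not_closeF_of_separation {A B K G H : Set X} (hK : IsCompact K) (hG : IsOpen G)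
    (hH : IsOpen H) (hGH : Disjoint G H) (hKc : Kᶜ = G ∪ H) (hA : A ⊆ G) (hB : B ⊆ H) :
    ¬ CloseF A B := fun h =>
  h ⟨G ∪ K, H, hA.trans subset_union_left, hB,
    by rw [union_right_comm, ← hKc, compl_union_self],
    hgeo.not_close_of_separation hK hG hH hGH hKc.le⟩

end IsGeodesicSpace

/-- a proper geodesic metric space is rim-compact, and the Freudenthal
proximity `δ` coincides with "closures meet or `A ≍_f B`". -/
theorem freudenthal_proximity_topological_eq_coarse {X : Type*} [MetricSpace X]
    [ProperSpace X] (hgeo : IsGeodesicSpace X) :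
    (∀ x : X, ∀ V ∈ nhds x, ∃ U : Set X, U ⊆ V ∧ IsOpen U ∧ x ∈ U ∧
      IsCompact (frontier U)) ∧
    (∀ A B : Set X,
      (¬ ∃ (K G H : Set X), IsCompact K ∧ IsOpen G ∧ IsOpen H ∧ Disjoint G H ∧
        Kᶜ = G ∪ H ∧ closure A ⊆ G ∧ closure B ⊆ H) ↔
      ((closure A ∩ closure B).Nonempty ∨ CloseF A B)) := by
  refine ⟨fun x V hV => ?_, fun A B => ⟨fun hnsep => ?_, ?_⟩⟩
  · obtain ⟨ε, hε, hball⟩ := Metric.mem_nhds_iff.1 hV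
    exact ⟨ball x ε, hball, isOpen_ball, mem_ball_self hε, isCompact_frontier_ball x ε⟩
  · by_contra h
    rw [not_or, not_nonempty_iff_eq_empty, ← disjoint_iff_inter_eq_empty, CloseF, not_not] at h
    obtain ⟨hdisj, A', B', hA, hB, hcover, hnc⟩ := h
    exact hnsep (exists_compact_separation_of_not_close hA hB hcover hnc hdisj)
  · rintro (⟨x, hxA, hxB⟩ | hcf) ⟨K, G, H, hK, hG, hH, hGH, hKc, hA, hB⟩
    · exact disjoint_left.1 hGH (hA hxA) (hB hxB)
    · exact hgeo.not_closeF_of_separation hK hG hH hGH hKc (subset_closure.trans hA)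
        (subset_closure.trans hB) hcf
end
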